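/- arXiv:2112.05065 — 2 statements merged into one kernel-verified Lean document; each statement's English description precedes it below -/
import Mathlib

section
/- Let G be a subgroup of Sym(Ω), let x ∈ Sym(Ω), and let f_L, f_R : Stacks(O) → Stacks(O). Then (f_L, f_R) is a refiner for the right coset Gx if and only if (f_L, f_L) is a refiner for G and f_R = f_L^x. -/
/-- A right action of a group `G` on a type `O`, written exponentially in the paper:
`act o g` is `o ^ g`. -/
structure RAct (G : Type*) [Group G] (O : Type*) where
  act : O → G → O
  act_one : ∀ o : O, act o 1 = o
  act_mul : ∀ (o : O) (g h : G), act o (g * h) = act (act o g) h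

namespace RAct

variable {G : Type*} [Group G] {O : Type*}

/-- The induced entrywise right action on stacks (finite lists) with entries in `O`. -/
def stack (a : RAct G O) : RAct G (List O) where
  act S g := S.map fun o => a.act o g
  act_one S := by
    have h : (fun o => a.act o 1) = id := funext fun o => a.act_one o
    simp [h]
  act_mul S g h := by
    try simp only []
    rw [List.map_map]
    refine List.map_congr_left fun o _ => ?_
    exact a.act_mul o g h

/-- The transporter set `Iso(x, y) = {g : x ^ g = y}`. -/
def iso {X : Type*} (b : RAct G X) (x y : X) : Set G := {g | b.act x g = y}

/-- A refiner for `U`: a pair of functions on stacks with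
`U ∩ Iso(S, T) ⊆ Iso(f_L S, f_R T)` for all stacks `S`, `T`. -/
def IsRefiner (a : RAct G O) (U : Set G) (fL fR : List O → List O) : Prop :=
  ∀ S T : List O, U ∩ a.stack.iso S T ⊆ a.stack.iso (fL S) (fR T)

/-- A perfect refiner for `U`: a refiner such that
`U ∩ Iso(S, T) = Iso(S ‖ f_L S, T ‖ f_R T)` whenever `|S| = |T|`. -/
def IsPerfectRefiner (a : RAct G O) (U : Set G) (fL fR : List O → List O) : Prop :=
  IsRefiner a U fL fR ∧
    ∀ S T : List O, S.length = T.length →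
      U ∩ a.stack.iso S T = a.stack.iso (S ++ fL S) (T ++ fR T)

/-- The action of `x ∈ G` on functions on stacks: `f ^ x (S) = (f (S ^ x⁻¹)) ^ x`. -/
def conj (a : RAct G O) (f : List O → List O) (x : G) : List O → List O :=
  fun S => a.stack.act (f (a.stack.act S x⁻¹)) x

/-- The combination `f ‖ g` of two functions on stacks: `(f ‖ g)(S) = f S ‖ g S`. -/
def comb (f g : List O → List O) : List O → List O := fun S => f S ++ g S

end RAct

/-! Since `x ∈ G x`, the pair `(T ^ x⁻¹, T)` forces `f_R T = f_L (T ^ x⁻¹) ^ x`. Moreover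
`g x ∈ Iso(S, T)` iff `g ∈ Iso(S, T ^ x⁻¹)`, so right translation by `x` matches refiners
`(f_L, f_L)` for `G` with refiners `(f_L, f_L ^ x)` for `G x`. -/

namespace RAct

variable {G : Type*} [Group G]

theorem act_act_inv {X : Type*} (b : RAct G X) (s : X) (g : G) :
    b.act (b.act s g) g⁻¹ = s := by
  rw [← b.act_mul, mul_inv_cancel, b.act_one]

theorem act_inv_act {X : Type*} (b : RAct G X) (s : X) (g : G) :
    b.act (b.act s g⁻¹) g = s := by
  simpa using b.act_act_inv s g⁻¹

theorem mul_mem_iso_iff {X : Type*} (b : RAct G X) (s t : X) (g x : G) :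
    g * x ∈ b.iso s t ↔ g ∈ b.iso s (b.act t x⁻¹) := by
  show b.act s (g * x) = t ↔ b.act s g = b.act t x⁻¹
  rw [b.act_mul]
  constructor
  · rintro rfl
    exact (b.act_act_inv _ x).symm
  · intro h
    rw [h, b.act_inv_act]

variable {O : Type*}

theorem IsRefiner.eq_conj_of_mem {a : RAct G O} {U : Set G} {fL fR : List O → List O}
    (h : a.IsRefiner U fL fR) {x : G} (hx : x ∈ U) : fR = a.conj fL x := by
  funext T
  exact (h (a.stack.act T x⁻¹) T ⟨hx, a.stack.act_inv_act T x⟩).symm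

theorem isRefiner_mul_right_conj_iff (a : RAct G O) (U : Set G) (x : G)
    (fL fR : List O → List O) :
    a.IsRefiner {u | ∃ g ∈ U, u = g * x} fL (a.conj fR x) ↔ a.IsRefiner U fL fR := by
  have hconj : ∀ T, a.conj fR x (a.stack.act T x) = a.stack.act (fR T) x := fun T => by
    simp only [conj, act_act_inv]
  constructor
  · intro h S T g ⟨hg, hST⟩
    have hgx : g * x ∈ a.stack.iso S (a.stack.act T x) := by
      rw [mul_mem_iso_iff, act_act_inv]
      exact hST
    have := h S (a.stack.act T x) ⟨⟨g, hg, rfl⟩, hgx⟩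
    rwa [hconj, mul_mem_iso_iff, act_act_inv] at this
  · rintro h S T _ ⟨⟨g, hg, rfl⟩, hST⟩
    rw [mul_mem_iso_iff] at hST ⊢
    simpa only [conj, act_act_inv] using h S _ ⟨hg, hST⟩

end RAct

theorem stmt2_general {Ω : Type*} {O : Type*}
    (a : RAct (Equiv.Perm Ω) O) (G : Subgroup (Equiv.Perm Ω)) (x : Equiv.Perm Ω)
    (fL fR : List O → List O) :
    a.IsRefiner {u : Equiv.Perm Ω | ∃ g ∈ G, u = g * x} fL fR ↔
      a.IsRefiner (G : Set (Equiv.Perm Ω)) fL fL ∧ fR = a.conj fL x := by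
  constructor
  · intro h
    obtain rfl := h.eq_conj_of_mem ⟨1, G.one_mem, (one_mul x).symm⟩
    exact ⟨(a.isRefiner_mul_right_conj_iff G x fL fL).1 h, rfl⟩
  · rintro ⟨h, rfl⟩
    exact (a.isRefiner_mul_right_conj_iff G x fL fL).2 h

/-- `(f_L, f_R)` is a refiner for the right coset `G x` if and only if
`(f_L, f_L)` is a refiner for `G` and `f_R = f_L ^ x`. -/
theorem stmt2 {Ω : Type*} [Fintype Ω] [Nonempty Ω] {O : Type*}
    (a : RAct (Equiv.Perm Ω) O) (G : Subgroup (Equiv.Perm Ω)) (x : Equiv.Perm Ω)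
    (fL fR : List O → List O) :
    a.IsRefiner {u : Equiv.Perm Ω | ∃ g ∈ G, u = g * x} fL fR ↔
      a.IsRefiner (G : Set (Equiv.Perm Ω)) fL fL ∧ fR = a.conj fL x :=
  stmt2_general a G x fL fR
end

section
/- Let Ω be a nonempty finite set and let G be a subgroup of Sym(Ω). Then there exist a type L and a function F : Ω × Ω → L such that G = {g ∈ Sym(Ω) : F(p^g) = F(p) for all p ∈ Ω × Ω} if and only if G is 2-closed, i.e., G = {g ∈ Sym(Ω) : p^g lies in the G-orbit of p, for every p ∈ Ω × Ω}. -/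
/-- A subgroup `G ≤ Sym Ω` is the stabiliser of a labelling function
`F : Ω × Ω → L` (equivalently, of a labelled digraph stack on `Ω`) if and only if `G` is
2-closed, i.e. `G` consists exactly of those permutations mapping every pair
`p ∈ Ω × Ω` into its `G`-orbit. -/
theorem stmt16 {Ω : Type*} [Fintype Ω] [Nonempty Ω] (G : Subgroup (Equiv.Perm Ω)) :
    (∃ (L : Type) (F : Ω × Ω → L),
        (G : Set (Equiv.Perm Ω)) =
          {g : Equiv.Perm Ω | ∀ p : Ω × Ω, F (g p.1, g p.2) = F p}) ↔
      (G : Set (Equiv.Perm Ω)) =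
        {g : Equiv.Perm Ω | ∀ p : Ω × Ω,
          (g p.1, g p.2) ∈ {q : Ω × Ω | ∃ h ∈ G, (h p.1, h p.2) = q}} := by
  constructor
  · rintro ⟨L, F, hF⟩
    ext g
    simp only [Set.mem_setOf_eq]
    constructor
    · intro hg p
      exact ⟨g, hg, rfl⟩
    · intro hg
      have : g ∈ {g : Equiv.Perm Ω | ∀ p : Ω × Ω, F (g p.1, g p.2) = F p} := by
        intro p
        obtain ⟨h, hh, hp⟩ := hg p
        have hh' : h ∈ (G : Set (Equiv.Perm Ω)) := hh
        rw [hF] at hh'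
        have hstab : ∀ q : Ω × Ω, F (h q.1, h q.2) = F q := hh'
        rw [← hp]
        exact hstab p
      exact Set.ext_iff.mp hF g |>.mpr this
  · intro h2
    set e := Fintype.equivFin Ω with he
    refine ⟨Set (Fin (Fintype.card Ω) × Fin (Fintype.card Ω)),
      fun p => {q | ∃ h ∈ G, (e (h p.1), e (h p.2)) = q}, ?_⟩
    ext g
    simp only [Set.mem_setOf_eq]
    constructor
    · intro hg p
      ext q
      simp only [Set.mem_setOf_eq]
      constructor
      · rintro ⟨h, hh, rfl⟩
        exact ⟨h * g, G.mul_mem hh hg, rfl⟩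
      · rintro ⟨h, hh, rfl⟩
        refine ⟨h * g⁻¹, G.mul_mem hh (G.inv_mem hg), ?_⟩
        simp [Equiv.Perm.mul_apply]
    · intro hg
      have : g ∈ {g : Equiv.Perm Ω | ∀ p : Ω × Ω,
          (g p.1, g p.2) ∈ {q : Ω × Ω | ∃ h ∈ G, (h p.1, h p.2) = q}} := by
        intro p
        have hset := hg p
        have h1 : (e (g p.1), e (g p.2)) ∈
            {q | ∃ h ∈ G, (e (h (g p.1)), e (h (g p.2))) = q} := ⟨1, G.one_mem, rfl⟩
        rw [hset] at h1
        obtain ⟨h, hh, hq⟩ := h1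
        refine ⟨h, hh, ?_⟩
        have hq1 : e (h p.1) = e (g p.1) := congrArg Prod.fst hq
        have hq2 : e (h p.2) = e (g p.2) := congrArg Prod.snd hq
        exact Prod.ext (e.injective hq1) (e.injective hq2)
      exact Set.ext_iff.mp h2 g |>.mpr this
end
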